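/- Let A₁, …, A₁₄ be i.i.d. ℕ-valued random variables each with Poisson distribution of rate 1919, and let d₁, …, d₁₄ be nonnegative real-valued random variables with ∑ₜ₌₁..₁₄ dₜ ≤ 28800 almost surely. Define b₀ = 0 and bₜ = max(0, bₜ₋₁ + Aₜ + 2400 − 1920 − dₜ) for 1 ≤ t ≤ 14. Then E[f(b₁₄)] ≥ 19/20, where f is the cost function; consequently the defender's expected long-term reward −E[supₜ f(bₜ)] is at most −0.95. -/

import Mathlib

/-!
Because the backlog is reflected at `0`, it dominates the running sum of its increments, so with
the defender's budget spent, `b₁₄ ≥ S - 22080` where `S = ∑ Aₜ` has mean and variance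
`14 · 1919 = 26866` by independence. Thus `b₁₄` sits around `4786`, beyond the saturation point
`4350` of the cost, with standard deviation about `164`. Bounding `costf` from below by a
downward parabola with vertex at `4786` and taking expectations loses only the variance:
`E[costf b₁₄] ≥ 1 - 26866 / 1384300 > 19 / 20`.
-/

open MeasureTheory

/-- A ℕ-valued random variable `S` on a probability space `(Ω, P)` has Poisson
distribution with rate `lam > 0` if `P(S = n) = exp(-lam) * lam^n / n!` for every `n`. -/
def HasPoissonDistribution {Ω : Type*} [MeasurableSpace Ω] (P : Measure Ω)
    (S : Ω → ℕ) (lam : ℝ) : Prop :=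
  ∀ n : ℕ, P {ω | S ω = n} = ENNReal.ofReal (Real.exp (-lam) * lam ^ n / n.factorial)

/-- The cost function `f` of the CSOC model: `f x = 0` for `x ≤ 1175`,
`f x = (x - 1175)/(4350 - 1175)` for `1175 < x < 4350`, and `f x = 1` for `x ≥ 4350`. -/
noncomputable def costf (x : ℝ) : ℝ :=
  if x ≤ 1175 then 0 else if x < 4350 then (x - 1175) / (4350 - 1175) else 1

open ProbabilityTheory Real Finset
open scoped NNReal Nat

namespace ProbabilityTheory

lemma hasSum_poissonMeasure_mul_descFactorial (r : ℝ≥0) (k : ℕ) :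
    HasSum (fun n ↦ exp (-r) * r ^ n / n ! * (n.descFactorial k : ℝ)) (r ^ k) := by
  rw [← hasSum_nat_add_iff' k]
  have hlow : ∑ n ∈ range k, exp (-r) * r ^ n / n ! * (n.descFactorial k : ℝ) = 0 :=
    sum_eq_zero fun n hn ↦ by
      simp [Nat.descFactorial_eq_zero_iff_lt.mpr (mem_range.mp hn)]
  have hshift (n : ℕ) : exp (-r) * r ^ (n + k) / (n + k)! * ((n + k).descFactorial k : ℝ)
      = r ^ k * (exp (-r) * r ^ n / n !) := by
    have h := Nat.factorial_mul_descFactorial (Nat.le_add_left k n)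
    rw [Nat.add_sub_cancel] at h
    rw [← h]
    push_cast
    field_simp
    ring
  simp only [hlow, sub_zero, hshift]
  simpa using (hasSum_one_poissonMeasure r).mul_left ((r : ℝ) ^ k)

lemma hasSum_poissonMeasure_mul_natCast (r : ℝ≥0) :
    HasSum (fun n ↦ exp (-r) * r ^ n / n ! * (n : ℝ)) r := by
  simpa using hasSum_poissonMeasure_mul_descFactorial r 1

lemma hasSum_poissonMeasure_mul_natCast_sq (r : ℝ≥0) :
    HasSum (fun n ↦ exp (-r) * r ^ n / n ! * (n : ℝ) ^ 2) (r ^ 2 + r) := by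
  have hsq (n : ℕ) : (n : ℝ) ^ 2 = n.descFactorial 2 + n := by
    rcases n with _ | n
    · simp
    · simp only [Nat.descFactorial_succ, Nat.descFactorial_zero, add_tsub_cancel_right,
        tsub_zero, mul_one, Nat.cast_mul, Nat.cast_add, Nat.cast_one]
      ring
  simp only [hsq, mul_add]
  exact (hasSum_poissonMeasure_mul_descFactorial r 2).add (hasSum_poissonMeasure_mul_natCast r)

lemma memLp_two_natCast_poissonMeasure (r : ℝ≥0) : MemLp (Nat.cast : ℕ → ℝ) 2 Po(r) := by
  rw [memLp_two_iff_integrable_sq .of_discrete, integrable_poissonMeasure_iff]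
  simpa using (hasSum_poissonMeasure_mul_natCast_sq r).summable

lemma integral_natCast_poissonMeasure (r : ℝ≥0) : ∫ n, (n : ℝ) ∂Po(r) = r := by
  rw [integral_poissonMeasure]
  exact (hasSum_poissonMeasure_mul_natCast r).tsum_eq

lemma variance_natCast_poissonMeasure (r : ℝ≥0) : Var[(Nat.cast : ℕ → ℝ); Po(r)] = r := by
  rw [variance_eq_sub (memLp_two_natCast_poissonMeasure r), integral_natCast_poissonMeasure,
    integral_poissonMeasure]
  simp only [Pi.pow_apply, smul_eq_mul, (hasSum_poissonMeasure_mul_natCast_sq r).tsum_eq]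
  ring

end ProbabilityTheory

section PoissonArrivals

variable {Ω : Type*} [MeasurableSpace Ω] {P : Measure Ω} {r : ℝ≥0}

lemma HasPoissonDistribution.hasLaw {S : Ω → ℕ} (h : HasPoissonDistribution P S r)
    (hS : Measurable S) : HasLaw S Po(r) P where
  aemeasurable := hS.aemeasurable
  map_eq := Measure.ext_of_singleton fun n ↦ by
    rw [Measure.map_apply hS (measurableSet_singleton n), poissonMeasure_singleton]
    exact h n

namespace ProbabilityTheory.HasLaw

variable {S : Ω → ℕ}

lemma memLp_natCast_of_poisson (hS : HasLaw S Po(r) P) : MemLp (fun ω ↦ (S ω : ℝ)) 2 P :=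
  (memLp_map_measure_iff .of_discrete hS.aemeasurable).mp
    (hS.map_eq ▸ memLp_two_natCast_poissonMeasure r)

lemma integrable_natCast_of_poisson (hS : HasLaw S Po(r) P) :
    Integrable (fun ω ↦ (S ω : ℝ)) P :=
  have := hS.isProbabilityMeasure
  hS.memLp_natCast_of_poisson.integrable one_le_two

lemma integral_natCast_of_poisson (hS : HasLaw S Po(r) P) :
    P[fun ω ↦ (S ω : ℝ)] = (r : ℝ) :=
  (hS.integral_comp .of_discrete).trans (integral_natCast_poissonMeasure r)

lemma variance_natCast_of_poisson (hS : HasLaw S Po(r) P) :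
    Var[fun ω ↦ (S ω : ℝ); P] = (r : ℝ) := by
  rw [← variance_natCast_poissonMeasure r, ← hS.map_eq,
    variance_map .of_discrete hS.aemeasurable]
  rfl

end ProbabilityTheory.HasLaw

variable {ι : Type*} [Fintype ι] {A : ι → Ω → ℕ}

lemma integral_sum_natCast_of_poisson (hA : ∀ i, HasLaw (A i) Po(r) P) :
    P[fun ω ↦ ∑ i, (A i ω : ℝ)] = Fintype.card ι * (r : ℝ) := by
  rw [integral_finsetSum _ fun i _ ↦ (hA i).integrable_natCast_of_poisson]
  simp [(hA _).integral_natCast_of_poisson]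

lemma variance_sum_natCast_of_poisson (hA : ∀ i, HasLaw (A i) Po(r) P) (hind : iIndepFun A P) :
    Var[fun ω ↦ ∑ i, (A i ω : ℝ); P] = Fintype.card ι * (r : ℝ) := by
  have hsum : (fun ω ↦ ∑ i, (A i ω : ℝ)) = ∑ i, fun ω ↦ (A i ω : ℝ) := by
    ext ω; simp
  rw [hsum, IndepFun.variance_sum (fun i _ ↦ (hA i).memLp_natCast_of_poisson)
    fun i _ j _ hij ↦ (hind.indepFun hij).comp .of_discrete .of_discrete]
  simp [(hA _).variance_natCast_of_poisson]

end PoissonArrivals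

lemma add_sum_le_of_add_le_succ {n : ℕ} (b : ℕ → ℝ) (x : Fin n → ℝ)
    (h : ∀ t : Fin n, b t + x t ≤ b (t + 1)) : b 0 + ∑ t, x t ≤ b n := by
  induction n with
  | zero => simp
  | succ n ih =>
    have hlast := h (Fin.last n)
    have hinit := ih (fun t ↦ x t.castSucc) fun t ↦ by simpa using h t.castSucc
    rw [Fin.sum_univ_castSucc]
    simp only [Fin.val_last] at hlast
    linarith

section Cost

variable {Ω : Type*} [MeasurableSpace Ω] {P : Measure Ω}

lemma costf_nonneg (x : ℝ) : 0 ≤ costf x := by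
  unfold costf
  split_ifs with h1 h2
  · rfl
  · exact div_nonneg (by linarith) (by norm_num)
  · norm_num

lemma costf_le_one (x : ℝ) : costf x ≤ 1 := by
  unfold costf
  split_ifs with h1 h2
  · norm_num
  · rw [div_le_one (by norm_num)]; linarith
  · rfl

lemma measurable_costf : Measurable costf :=
  Measurable.ite (measurableSet_le measurable_id measurable_const) measurable_const <|
    Measurable.ite (measurableSet_lt measurable_id measurable_const)
      ((measurable_id.sub measurable_const).div_const _) measurable_const

lemma integrable_costf_comp [IsFiniteMeasure P] {X : Ω → ℝ} (hX : Measurable X) :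
    Integrable (fun ω ↦ costf (X ω)) P :=
  .of_bound (measurable_costf.comp hX).aestronglyMeasurable 1 <| .of_forall fun ω ↦ by
    rw [Real.norm_of_nonneg (costf_nonneg _)]
    exact costf_le_one _

/- On the ramp, the cost minus the parabola is a convex quadratic in `x`, minimal and still
positive at `x = 4568`. The width `1384300` makes a variance of `26866` cost less than `1 / 20`. -/
lemma one_sub_sq_div_le_costf {x y : ℝ} (h : y ≤ x) :
    1 - (y - 4786) ^ 2 / 1384300 ≤ costf x := by
  unfold costf
  split_ifs with h1 h2
  · nlinarith [sq_nonneg (1175 - y)]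
  · have h3 : (x - 4786) ^ 2 ≤ (y - 4786) ^ 2 := by nlinarith
    nlinarith [sq_nonneg (x - 4568)]
  · have : (0 : ℝ) ≤ (y - 4786) ^ 2 / 1384300 := by positivity
    linarith

lemma one_sub_variance_div_le_integral_costf [IsProbabilityMeasure P] {X Y : Ω → ℝ}
    (hX : Measurable X) (hY : MemLp Y 2 P) (hmean : P[Y] = 4786) (hYX : Y ≤ᵐ[P] X) :
    1 - Var[Y; P] / 1384300 ≤ ∫ ω, costf (X ω) ∂P := by
  have hsq : Integrable (fun ω ↦ (Y ω - 4786) ^ 2) P := by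
    simpa using (hY.sub (memLp_const 4786)).integrable_sq
  calc 1 - Var[Y; P] / 1384300 = ∫ ω, (1 - (Y ω - 4786) ^ 2 / 1384300) ∂P := by
        rw [variance_eq_integral hY.aemeasurable, hmean,
          integral_sub (integrable_const 1) (hsq.div_const _), integral_div]
        simp
    _ ≤ ∫ ω, costf (X ω) ∂P := by
      refine integral_mono_ae ((integrable_const 1).sub (hsq.div_const _))
        (integrable_costf_comp hX) ?_
      filter_upwards [hYX] with ω hω
      exact one_sub_sq_div_le_costf hω

lemma integral_costf_le_integral_iSup [IsFiniteMeasure P] {n : ℕ} {X : Fin n → Ω → ℝ}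
    (hX : ∀ t, Measurable (X t)) (t : Fin n) :
    ∫ ω, costf (X t ω) ∂P ≤ ∫ ω, ⨆ s, costf (X s ω) ∂P := by
  have hle (ω : Ω) : costf (X t ω) ≤ ⨆ s, costf (X s ω) :=
    le_ciSup (f := fun s ↦ costf (X s ω)) (Set.finite_range _).bddAbove t
  have hsup : Integrable (fun ω ↦ ⨆ s, costf (X s ω)) P :=
    .of_bound (Measurable.iSup fun s ↦ measurable_costf.comp (hX s)).aestronglyMeasurable 1 <|
      .of_forall fun ω ↦ by
        rw [Real.norm_of_nonneg ((costf_nonneg _).trans (hle ω))]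
        have : Nonempty (Fin n) := ⟨t⟩
        exact ciSup_le fun s ↦ costf_le_one _
  exact integral_mono (integrable_costf_comp (hX t)) hsup hle

end Cost

theorem attacker_budget_advantage_general {Ω : Type*} [MeasurableSpace Ω] (P : Measure Ω)
    [IsProbabilityMeasure P]
    (A : Fin 14 → Ω → ℕ) (d : Fin 14 → Ω → ℝ)
    (hAmeas : ∀ i, Measurable (A i))
    (hindep : ProbabilityTheory.iIndepFun A P)
    (hpois : ∀ i, HasPoissonDistribution P (A i) 1919)
    (hdsum : ∀ᵐ ω ∂P, ∑ i, d i ω ≤ 28800)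
    (b : ℕ → Ω → ℝ)
    (hbmeas : ∀ t, Measurable (b t))
    (hb0 : ∀ ω, b 0 ω = 0)
    (hb : ∀ t : Fin 14, ∀ ω,
      b (t + 1) ω = max 0 (b t ω + A t ω + 2400 - 1920 - d t ω)) :
    19 / 20 ≤ ∫ ω, costf (b 14 ω) ∂P ∧
      -∫ ω, (⨆ t : Fin 14, costf (b (t + 1) ω)) ∂P ≤ -0.95 := by
  have hlaw (i : Fin 14) : HasLaw (A i) Po(1919) P := (hpois i).hasLaw (hAmeas i)
  set S : Ω → ℝ := fun ω ↦ ∑ i, (A i ω : ℝ)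
  have hbacklog : ∀ᵐ ω ∂P, S ω - 22080 ≤ b 14 ω := by
    filter_upwards [hdsum] with ω hω
    have h := add_sum_le_of_add_le_succ (b · ω) (fun t ↦ A t ω + 480 - d t ω) fun t ↦ by
      rw [hb t ω]
      exact le_of_eq_of_le (by ring) (le_max_right _ _)
    simp only [hb0, sum_sub_distrib, sum_add_distrib, sum_const, card_univ] at h
    norm_num at h
    linarith
  have hS : MemLp S 2 P := memLp_finsetSum _ fun i _ ↦ (hlaw i).memLp_natCast_of_poisson
  have hmean : P[fun ω ↦ S ω - 22080] = 4786 := by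
    rw [integral_sub (hS.integrable one_le_two) (integrable_const _),
      integral_sum_natCast_of_poisson hlaw]
    norm_num
  have hcost := one_sub_variance_div_le_integral_costf (Y := fun ω ↦ S ω - 22080) (hbmeas 14)
    (hS.sub (memLp_const _)) hmean hbacklog
  rw [variance_sub_const hS.aestronglyMeasurable, variance_sum_natCast_of_poisson hlaw hindep]
    at hcost
  have hsup := integral_costf_le_integral_iSup (P := P) (n := 14) (fun t ↦ hbmeas (t + 1)) 13
  norm_num at hcost hsup ⊢
  constructor <;> linarith

/-- Theorem 1(a): with i.i.d. Poisson(1919) hourly arrivals, an attacker dumping 2400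
extra alerts in each of the first 14 hours, nominal service 1920 alerts/hour, and any
defender allocations summing to at most 28800, the expected cost of the final backlog
is at least 19/20; consequently the defender's long-term reward `-E[sup_t f(b t)]`
is at most `-0.95`. -/
theorem attacker_budget_advantage {Ω : Type*} [MeasurableSpace Ω] (P : Measure Ω)
    [IsProbabilityMeasure P]
    (A : Fin 14 → Ω → ℕ) (d : Fin 14 → Ω → ℝ)
    (hAmeas : ∀ i, Measurable (A i))
    (hindep : ProbabilityTheory.iIndepFun A P)
    (hpois : ∀ i, HasPoissonDistribution P (A i) 1919)
    (hdmeas : ∀ i, Measurable (d i))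
    (hd0 : ∀ i ω, 0 ≤ d i ω)
    (hdsum : ∀ᵐ ω ∂P, ∑ i, d i ω ≤ 28800)
    (b : ℕ → Ω → ℝ)
    (hbmeas : ∀ t, Measurable (b t))
    (hb0 : ∀ ω, b 0 ω = 0)
    (hb : ∀ t : Fin 14, ∀ ω,
      b (t + 1) ω = max 0 (b t ω + A t ω + 2400 - 1920 - d t ω)) :
    19 / 20 ≤ ∫ ω, costf (b 14 ω) ∂P ∧
      -∫ ω, (⨆ t : Fin 14, costf (b (t + 1) ω)) ∂P ≤ -0.95 :=
  attacker_budget_advantage_general P A d hAmeas hindep hpois hdsum b hbmeas hb0 hb
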